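/- Upwind and downwind directional derivative limits for continuous piecewise linear functions: let ω_h be a continuous piecewise linear function on a simplicial triangulation of Ω ⊂ ℝⁿ, s a vertex, and β a Lipschitz vector field with flow X. Then the upwind limit lim_{Δτ→0⁺} (ω_h(s) − ω_h(X_{t,t−Δτ}(s)))/Δτ exists and equals β(s) · grad ω_h⁻(s), where grad ω_h⁻(s) is the (constant) gradient of ω_h on the simplex entered by the backward characteristic from s; similarly the downwind limit lim_{Δτ→0⁺} (ω_h(X_{t,t+Δτ}(s)) − ω_h(s))/Δτ equals β(s) · grad ω_h⁺(s) with the gradient taken in the simplex entered by the forward characteristic. In general these two limits differ. -/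
import Mathlib


open scoped RealInnerProductSpace

private lemma aux_limit
    {E : Type*} [NormedAddCommGroup E] [InnerProductSpace ℝ E]
    (ωh : E → ℝ) (s : E) (c : ℝ → E) (hc0 : c 0 = s) (v g : E)
    (hd : HasDerivAt c v 0) (ε : ℝ) (hε : 0 < ε)
    (haff : ∀ τ ∈ Set.Ioc (0 : ℝ) ε, ωh (c τ) = ωh s + ⟪g, c τ - s⟫) :
    Filter.Tendsto (fun Δτ => (ωh (c Δτ) - ωh s) / Δτ)
        (nhdsWithin 0 (Set.Ioi 0)) (nhds ⟪g, v⟫) := by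
  have hslope : Filter.Tendsto (slope c 0) (nhdsWithin 0 {(0:ℝ)}ᶜ) (nhds v) :=
    hasDerivAt_iff_tendsto_slope.mp hd
  have h1 : Filter.Tendsto (fun Δτ => ⟪g, slope c 0 Δτ⟫)
      (nhdsWithin 0 (Set.Ioi 0)) (nhds ⟪g, v⟫) := by
    exact ((continuous_inner.comp (continuous_const.prodMk continuous_id)).continuousAt.tendsto.comp
      (hslope.mono_left (nhdsWithin_mono _ (fun x hx => ne_of_gt hx))))
  refine h1.congr' ?_
  filter_upwards [Ioc_mem_nhdsGT_of_mem (Set.left_mem_Ico.mpr hε)] with τ hτ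
  rw [haff τ hτ, slope_def_module]
  simp only [sub_zero, hc0]
  rw [real_inner_smul_right]
  ring

/-- Upwind and downwind directional derivative limits for continuous
piecewise linear functions: let `ωh` be continuous, `s` a vertex, `β` Lipschitz, `c` the
backward characteristic through `s` (`c(0) = s`, `c' = −β ∘ c`) and `f` the forward
characteristic (`f(0) = s`, `f' = β ∘ f`). If `ωh` is affine with gradient `gm` along an
initial segment of the backward characteristic and affine with gradient `gp` along an
initial segment of the forward characteristic, then the upwind limit
`lim_{Δτ→0⁺} (ωh(s) − ωh(c(Δτ)))/Δτ` exists and equals `β(s) · gm`, and the downwind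
limit `lim_{Δτ→0⁺} (ωh(f(Δτ)) − ωh(s))/Δτ` exists and equals `β(s) · gp`
(in general these differ). -/
theorem upwind_downwind_limits
    {E : Type*} [NormedAddCommGroup E] [InnerProductSpace ℝ E]
    (β : E → E) (K : NNReal) (hβ : LipschitzWith K β)
    (ωh : E → ℝ) (hωh : Continuous ωh)
    (s : E) (c f : ℝ → E)
    (hc0 : c 0 = s) (hc : ∀ τ : ℝ, HasDerivAt c (-(β (c τ))) τ)
    (hf0 : f 0 = s) (hf : ∀ τ : ℝ, HasDerivAt f (β (f τ)) τ)
    (gm gp : E) (εm εp : ℝ) (hεm : 0 < εm) (hεp : 0 < εp)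
    (haffm : ∀ τ ∈ Set.Ioc (0 : ℝ) εm, ωh (c τ) = ωh s + ⟪gm, c τ - s⟫)
    (haffp : ∀ τ ∈ Set.Ioc (0 : ℝ) εp, ωh (f τ) = ωh s + ⟪gp, f τ - s⟫) :
    Filter.Tendsto (fun Δτ => (ωh s - ωh (c Δτ)) / Δτ)
        (nhdsWithin 0 (Set.Ioi 0)) (nhds ⟪β s, gm⟫) ∧
    Filter.Tendsto (fun Δτ => (ωh (f Δτ) - ωh s) / Δτ)
        (nhdsWithin 0 (Set.Ioi 0)) (nhds ⟪β s, gp⟫) := by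
  constructor
  · have h := aux_limit ωh s c hc0 (-(β s)) gm (hc0 ▸ hc 0) εm hεm haffm
    have h2 := h.neg
    simp only [inner_neg_right] at h2
    rw [neg_neg, real_inner_comm] at h2
    refine h2.congr fun τ => by ring
  · have h := aux_limit ωh s f hf0 (β s) gp (hf0 ▸ hf 0) εp hεp haffp
    rwa [real_inner_comm] at h
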